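/- The number of permutations of [n] avoiding the generalized pattern 1-23 equals the n-th Bell number B_n. -/
import Mathlib


def contains123 {n : ℕ} (π : Equiv.Perm (Fin n)) : Prop :=
  ∃ i j : ℕ, ∃ (_ : i < j) (hj : j + 1 < n),
    π ⟨i, by omega⟩ < π ⟨j, by omega⟩ ∧ π ⟨j, by omega⟩ < π ⟨j + 1, hj⟩

namespace Stmt0Aux

variable {n : ℕ}

/-- Prefix minimum of a permutation, in position space. -/
def pmin (π : Equiv.Perm (Fin n)) (p : Fin n) : Fin n :=
  (Finset.Iic p).inf' ⟨p, Finset.mem_Iic.2 le_rfl⟩ π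

lemma pmin_le (π : Equiv.Perm (Fin n)) {p q : Fin n} (h : q ≤ p) : pmin π p ≤ π q :=
  Finset.inf'_le _ (Finset.mem_Iic.2 h)

lemma le_pmin (π : Equiv.Perm (Fin n)) {p : Fin n} {a : Fin n}
    (h : ∀ q, q ≤ p → a ≤ π q) : a ≤ pmin π p :=
  Finset.le_inf' _ _ fun q hq => h q (Finset.mem_Iic.1 hq)

lemma pmin_exists (π : Equiv.Perm (Fin n)) (p : Fin n) :
    ∃ q, q ≤ p ∧ pmin π p = π q := by
  obtain ⟨q, hq, hq'⟩ := Finset.exists_mem_eq_inf' ⟨p, Finset.mem_Iic.2 le_rfl⟩ π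
  exact ⟨q, Finset.mem_Iic.1 hq, hq'⟩

/-- The block-minimum function of a permutation, in value space. -/
def bmin (π : Equiv.Perm (Fin n)) (v : Fin n) : Fin n := pmin π (π.symm v)

lemma bmin_apply (π : Equiv.Perm (Fin n)) (p : Fin n) : bmin π (π p) = pmin π p := by
  simp [bmin]

lemma bmin_le (π : Equiv.Perm (Fin n)) (v : Fin n) : bmin π v ≤ v := by
  have h := pmin_le π (le_refl (π.symm v))
  simpa [bmin] using h

lemma bmin_idem (π : Equiv.Perm (Fin n)) (v : Fin n) : bmin π (bmin π v) = bmin π v := by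
  obtain ⟨q0, hq0, hq0'⟩ := pmin_exists π (π.symm v)
  have hb : bmin π v = π q0 := hq0'
  rw [hb, bmin_apply]
  refine le_antisymm (pmin_le π le_rfl) (le_pmin π fun q hq => ?_)
  have h1 : q ≤ π.symm v := le_trans hq hq0
  have h2 : pmin π (π.symm v) ≤ π q := pmin_le π h1
  rw [hq0'] at h2
  exact h2

/-- Encoding of a block-min function as a natural number key, whose increasing order
is: blocks by decreasing minimum; within a block the minimum first, then decreasing. -/
def key (f : Fin n → Fin n) (v : Fin n) : ℕ :=
  (n - 1 - (f v : ℕ)) * (n + 1) + (if f v = v then 0 else n - (v : ℕ))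

lemma key_sec_le (f : Fin n → Fin n) (v : Fin n) :
    (if f v = v then 0 else n - (v : ℕ)) ≤ n := by
  split <;> omega

lemma key_lower (f : Fin n → Fin n) (v : Fin n) :
    (n - 1 - (f v : ℕ)) * (n + 1) ≤ key f v := Nat.le_add_right _ _

lemma key_upper (f : Fin n → Fin n) (v : Fin n) :
    key f v < ((n - 1 - (f v : ℕ)) + 1) * (n + 1) := by
  have h := key_sec_le f v
  unfold key
  generalize (n - 1 - ((f v : ℕ))) = A
  rw [Nat.succ_mul]
  omega

/-- If `f w < f v` then `key f v < key f w`. -/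
lemma key_lt_of_flt {f : Fin n → Fin n} {v w : Fin n} (h : (f w : ℕ) < (f v : ℕ)) :
    key f v < key f w := by
  have hv : (f v : ℕ) < n := (f v).isLt
  have h1 : (n - 1 - (f v : ℕ)) + 1 ≤ n - 1 - (f w : ℕ) := by omega
  calc key f v < ((n - 1 - (f v : ℕ)) + 1) * (n + 1) := key_upper f v
    _ ≤ (n - 1 - (f w : ℕ)) * (n + 1) := Nat.mul_le_mul_right _ h1
    _ ≤ key f w := key_lower f w

lemma f_le_of_key_le {f : Fin n → Fin n} {v w : Fin n} (h : key f v ≤ key f w) :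
    (f w : ℕ) ≤ (f v : ℕ) := by
  by_contra hc
  push_neg at hc
  exact absurd h (not_le.2 (key_lt_of_flt hc))

lemma key_f_le {f : Fin n → Fin n} (hid : ∀ v, f (f v) = f v) (v : Fin n) :
    key f (f v) ≤ key f v := by
  have h0 : key f (f v) = (n - 1 - ((f v : ℕ))) * (n + 1) := by
    simp [key, hid v]
  rw [h0]
  exact key_lower f v

lemma key_injective (f : Fin n → Fin n) : Function.Injective (key f) := by
  intro v w h
  have h1 : (f w : ℕ) ≤ (f v : ℕ) := f_le_of_key_le h.le
  have h2 : (f v : ℕ) ≤ (f w : ℕ) := f_le_of_key_le h.ge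
  have hfvw : (f v : ℕ) = (f w : ℕ) := le_antisymm h2 h1
  have hf : f v = f w := Fin.ext hfvw
  unfold key at h
  rw [hfvw] at h
  have h3 : (if f v = v then 0 else n - (v : ℕ)) = (if f w = w then 0 else n - (w : ℕ)) := by
    omega
  have hvn : (v : ℕ) < n := v.isLt
  have hwn : (w : ℕ) < n := w.isLt
  by_cases hv : f v = v <;> by_cases hw : f w = w
  · rw [← hv, hf, hw]
  · rw [if_pos hv, if_neg hw] at h3; omega
  · rw [if_neg hv, if_pos hw] at h3; omega
  · rw [if_neg hv, if_neg hw] at h3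
    exact Fin.ext (by omega)

/-- The key of the block-min function is strictly monotone along an avoiding permutation. -/
lemma strictMono_key_bmin {π : Equiv.Perm (Fin n)} (hπ : ¬ contains123 π) :
    StrictMono (fun p => key (bmin π) (π p)) := by
  match n, π, hπ with
  | 0, π, hπ => intro a; exact absurd a.isLt (by omega)
  | (m+1), π, hπ =>
    rw [Fin.strictMono_iff_lt_succ]
    intro i
    set p : Fin (m + 1) := Fin.castSucc i with hp
    set p' : Fin (m + 1) := i.succ with hp'
    have hpp' : p ≤ p' := by
      simp only [hp, hp', Fin.le_def, Fin.coe_castSucc, Fin.val_succ]; omega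
    have hplt : p < p' := by
      simp only [hp, hp', Fin.lt_def, Fin.coe_castSucc, Fin.val_succ]; omega
    obtain ⟨q0, hq0, hq0'⟩ := pmin_exists π p
    have hm'm : pmin π p' ≤ pmin π p := by
      rw [hq0']; exact pmin_le π (le_trans hq0 hpp')
    show key (bmin π) (π p) < key (bmin π) (π p')
    rcases lt_or_eq_of_le hm'm with hlt | heq
    · -- primary decreases strictly
      apply key_lt_of_flt
      rw [bmin_apply, bmin_apply]
      exact hlt
    · -- same prefix minimum
      have hbne : π p' ≠ pmin π p := by
        intro hc
        rw [hq0'] at hc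
        have : p' = q0 := π.injective hc
        rw [this] at hplt
        exact absurd (lt_of_le_of_lt hq0 hplt) (lt_irrefl q0)
      have hb1 : bmin π (π p') = pmin π p := by rw [bmin_apply, heq]
      have hb0 : bmin π (π p) = pmin π p := by rw [bmin_apply]
      unfold key
      rw [hb0, hb1]
      have hbsec : (if pmin π p = π p' then 0 else (m + 1) - ((π p' : ℕ)))
          = (m + 1) - ((π p' : ℕ)) := if_neg (fun hc => hbne hc.symm)
      rw [hbsec]
      have hbn : (π p' : ℕ) < m + 1 := (π p').isLt
      by_cases ha : pmin π p = π p
      · rw [if_pos ha]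
        have : (π p' : ℕ) ≠ (pmin π p : ℕ) := fun hc => hbne (Fin.ext hc)
        generalize ((m + 1) - 1 - ((pmin π p : ℕ))) * ((m+1) + 1) = A
        omega
      · rw [if_neg ha]
        -- need π p' < π p
        have hba : (π p' : ℕ) < (π p : ℕ) := by
          by_contra hc
          push_neg at hc
          have hne : π p ≠ π p' := fun hc2 => (ne_of_lt hplt) (π.injective hc2)
          have hlt2 : (π p : ℕ) < (π p' : ℕ) :=
            lt_of_le_of_ne hc (fun hc2 => hne (Fin.ext hc2))
          have hmlt : pmin π p < π p :=
            lt_of_le_of_ne (pmin_le π le_rfl) ha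
          have hq0p : q0 < p := by
            rcases lt_or_eq_of_le hq0 with h | h
            · exact h
            · exfalso; rw [h] at hq0'; exact ha hq0'
          apply hπ
          have hq0plt : (q0 : ℕ) < (p : ℕ) := hq0p
          have hpbound : (p : ℕ) + 1 < m + 1 := by
            simp only [hp, Fin.coe_castSucc]
            omega
          refine ⟨(q0 : ℕ), (p : ℕ), hq0plt, hpbound, ?_, ?_⟩
          · simp only [Fin.eta]
            rw [← hq0']
            exact hmlt
          · have hpeq : (⟨(p : ℕ) + 1, hpbound⟩ : Fin (m+1)) = p' := by
              apply Fin.ext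
              simp [hp, hp']
            simp only [Fin.eta]
            rw [hpeq]
            exact Fin.lt_def.2 hlt2
        have hpn : (π p : ℕ) < m + 1 := (π p).isLt
        generalize ((m + 1) - 1 - ((pmin π p : ℕ))) * ((m+1) + 1) = A
        omega

/-- A permutation that sorts `key f` (for idempotent, decreasing `f`) avoids 1-23. -/
lemma not_contains_of_strictMono {f : Fin n → Fin n}
    (hle : ∀ v, f v ≤ v) (hid : ∀ v, f (f v) = f v)
    {σ : Equiv.Perm (Fin n)} (hσ : StrictMono (fun p => key f (σ p))) :
    ¬ contains123 σ := by
  rintro ⟨i, j, hij, hj, h1, h2⟩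
  set pi : Fin n := ⟨i, by omega⟩ with hpi
  set pj : Fin n := ⟨j, by omega⟩ with hpj
  set pj1 : Fin n := ⟨j + 1, hj⟩ with hpj1
  set a : Fin n := σ pj with hadef
  set b : Fin n := σ pj1 with hbdef
  set c : Fin n := σ pi with hcdef
  have hab : key f a < key f b := hσ (show pj < pj1 by simp [hpj, hpj1, Fin.lt_def])
  have hca : key f c < key f a := hσ (show pi < pj by simp [hpi, hpj, Fin.lt_def]; omega)
  have hfba : (f b : ℕ) ≤ (f a : ℕ) := f_le_of_key_le hab.le
  rcases lt_or_eq_of_le hfba with hflt | hfeq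
  · -- different blocks: f b < f a; the gap between key a and key b contains key (f b)
    have hfbb : f b ≠ b := by
      intro hc
      have h3 : (b : ℕ) < (f a : ℕ) := by rw [← hc]; exact hflt
      have h4 : (f a : ℕ) ≤ (a : ℕ) := hle a
      have h5 : (a : ℕ) < (b : ℕ) := h2
      omega
    have hA : key f a < key f (f b) := by
      apply key_lt_of_flt
      rw [hid]
      exact hflt
    have hB : key f (f b) < key f b := by
      unfold key
      rw [hid, if_pos rfl]
      rw [if_neg hfbb]
      have hbn : (b : ℕ) < n := b.isLt
      generalize (n - 1 - ((f b : ℕ))) * (n + 1) = A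
      omega
    set q : Fin n := σ.symm (f b) with hq
    have hσq : σ q = f b := σ.apply_symm_apply _
    have hq1 : pj < q := by
      have := hA
      rw [← hσq] at this
      exact (hσ.lt_iff_lt).1 this
    have hq2 : q < pj1 := by
      have := hB
      rw [← hσq] at this
      exact (hσ.lt_iff_lt).1 this
    rw [Fin.lt_def] at hq1 hq2
    simp only [hpj, hpj1] at hq1 hq2
    omega
  · -- same block
    by_cases ha : f a = a
    · -- a is the block minimum; but c is an earlier, smaller value
      have hfac : (f a : ℕ) ≤ (f c : ℕ) := f_le_of_key_le hca.le
      have hfc : (f c : ℕ) ≤ (c : ℕ) := hle c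
      have hca' : (c : ℕ) < (a : ℕ) := h1
      rw [ha] at hfac
      omega
    · by_cases hb : f b = b
      · -- b a block minimum with f a = f b; then a < b is impossible
        have : (f a : ℕ) ≤ (a : ℕ) := hle a
        have hab' : (a : ℕ) < (b : ℕ) := h2
        rw [← hfeq, hb] at *
        omega
      · -- neither is the minimum: keys compare by descending value
        unfold key at hab
        rw [if_neg ha, if_neg hb, hfeq] at hab
        have han : (a : ℕ) < n := a.isLt
        have hbn : (b : ℕ) < n := b.isLt
        have hab' : (a : ℕ) < (b : ℕ) := h2
        generalize (n - 1 - ((f b : ℕ))) * (n + 1) = A at hab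
        omega

/-- For a permutation sorting `key f`, the block-min function is `f` itself. -/
lemma bmin_eq_of_strictMono {f : Fin n → Fin n}
    (hle : ∀ v, f v ≤ v) (hid : ∀ v, f (f v) = f v)
    {σ : Equiv.Perm (Fin n)} (hσ : StrictMono (fun p => key f (σ p))) :
    bmin σ = f := by
  have main : ∀ p : Fin n, pmin σ p = f (σ p) := by
    intro p
    apply le_antisymm
    · -- pmin ≤ f (σ p) : the value f (σ p) occurs at a position ≤ p
      set q0 : Fin n := σ.symm (f (σ p)) with hq0
      have hσq0 : σ q0 = f (σ p) := σ.apply_symm_apply _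
      have hkey : key f (σ q0) ≤ key f (σ p) := by
        rw [hσq0]; exact key_f_le hid (σ p)
      have hq0p : q0 ≤ p := (hσ.le_iff_le).1 hkey
      calc pmin σ p ≤ σ q0 := pmin_le σ hq0p
        _ = f (σ p) := hσq0
    · -- f (σ p) ≤ pmin
      apply le_pmin
      intro q hq
      have hkey : key f (σ q) ≤ key f (σ p) := hσ.monotone hq
      have h1 : (f (σ p) : ℕ) ≤ (f (σ q) : ℕ) := f_le_of_key_le hkey
      have h2 : f (σ q) ≤ σ q := hle (σ q)
      exact le_trans (Fin.le_def.2 h1) h2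
  funext v
  have := main (σ.symm v)
  rw [σ.apply_symm_apply] at this
  exact this

lemma sort_strictMono (f : Fin n → Fin n) :
    StrictMono (fun p => key f (Tuple.sort (key f) p)) := by
  have hmono : Monotone (key f ∘ Tuple.sort (key f)) := Tuple.monotone_sort (key f)
  have hinj : Function.Injective (key f ∘ Tuple.sort (key f)) :=
    (key_injective f).comp (Tuple.sort (key f)).injective
  exact hmono.strictMono_of_injective hinj

/-- The bijection between 1-23-avoiding permutations and idempotent decreasing maps. -/
def equivPerm :
    {π : Equiv.Perm (Fin n) // ¬ contains123 π} ≃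
      {f : Fin n → Fin n // (∀ v, f v ≤ v) ∧ ∀ v, f (f v) = f v} where
  toFun π := ⟨bmin π.1, fun v => bmin_le _ _, fun v => bmin_idem _ _⟩
  invFun f := ⟨Tuple.sort (key f.1),
    not_contains_of_strictMono f.2.1 f.2.2 (sort_strictMono f.1)⟩
  left_inv := by
    rintro ⟨π, hπ⟩
    apply Subtype.ext
    have h1 : StrictMono (fun p => key (bmin π) (π p)) := strictMono_key_bmin hπ
    have h2 : StrictMono (fun p => key (bmin π) (Tuple.sort (key (bmin π)) p)) :=
      sort_strictMono (bmin π)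
    have h3 : key (bmin π) ∘ Tuple.sort (key (bmin π)) = key (bmin π) ∘ π :=
      Tuple.unique_monotone h2.monotone h1.monotone
    show Tuple.sort (key (bmin π)) = π
    ext p
    exact congrArg Fin.val (key_injective (bmin π) (congrFun h3 p))
  right_inv := by
    rintro ⟨f, hle, hid⟩
    apply Subtype.ext
    exact bmin_eq_of_strictMono hle hid (sort_strictMono f)

open Classical in
/-- The minimal representative of the class of `i`. -/
noncomputable def minRep (s : Setoid (Fin n)) (i : Fin n) : Fin n :=
  Finset.min' (Finset.univ.filter (fun j => s j i))
    ⟨i, Finset.mem_filter.2 ⟨Finset.mem_univ i, s.refl' i⟩⟩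

open Classical in
lemma minRep_rel (s : Setoid (Fin n)) (i : Fin n) : s (minRep s i) i := by
  have h := Finset.min'_mem (Finset.univ.filter (fun j => s j i))
    ⟨i, Finset.mem_filter.2 ⟨Finset.mem_univ i, s.refl' i⟩⟩
  exact (Finset.mem_filter.1 h).2

open Classical in
lemma minRep_le' (s : Setoid (Fin n)) {i j : Fin n} (h : s j i) : minRep s i ≤ j := by
  unfold minRep
  apply Finset.min'_le
  exact Finset.mem_filter.2 ⟨Finset.mem_univ j, h⟩

open Classical in
lemma le_minRep (s : Setoid (Fin n)) {i a : Fin n} (h : ∀ j, s j i → a ≤ j) :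
    a ≤ minRep s i := by
  unfold minRep
  apply Finset.le_min'
  intro j hj
  exact h j (Finset.mem_filter.1 hj).2

lemma minRep_le (s : Setoid (Fin n)) (i : Fin n) : minRep s i ≤ i :=
  minRep_le' s (s.refl' i)

lemma minRep_eq_of_rel (s : Setoid (Fin n)) {i j : Fin n} (h : s i j) :
    minRep s i = minRep s j := by
  apply le_antisymm
  · exact minRep_le' s (s.trans' (minRep_rel s j) (s.symm' h))
  · exact minRep_le' s (s.trans' (minRep_rel s i) h)

lemma minRep_idem (s : Setoid (Fin n)) (i : Fin n) :
    minRep s (minRep s i) = minRep s i :=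
  minRep_eq_of_rel s (minRep_rel s i)

/-- The bijection between setoids and idempotent decreasing maps. -/
noncomputable def equivSetoid :
    Setoid (Fin n) ≃ {f : Fin n → Fin n // (∀ v, f v ≤ v) ∧ ∀ v, f (f v) = f v} where
  toFun s := ⟨minRep s, fun v => minRep_le s v, fun v => minRep_idem s v⟩
  invFun f := Setoid.ker f.1
  left_inv := by
    intro s
    apply Setoid.ext
    intro i j
    constructor
    · intro h
      have h' : minRep s i = minRep s j := h
      exact s.trans' (s.symm' (minRep_rel s i)) (h' ▸ minRep_rel s j)
    · intro h
      exact minRep_eq_of_rel s h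
  right_inv := by
    rintro ⟨f, hle, hid⟩
    apply Subtype.ext
    funext i
    show minRep (Setoid.ker f) i = f i
    apply le_antisymm
    · exact minRep_le' (Setoid.ker f) (show f (f i) = f i from hid i)
    · apply le_minRep
      intro j hj
      have hji : f j = f i := hj
      calc f i = f j := hji.symm
        _ ≤ j := hle j

end Stmt0Aux

theorem stmt0 (n : ℕ) :
    Nat.card {π : Equiv.Perm (Fin n) // ¬ contains123 π} = Nat.card (Setoid (Fin n)) := by
  exact Nat.card_congr (Stmt0Aux.equivPerm.trans Stmt0Aux.equivSetoid.symm)
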